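/- For every nonempty class F ⊆ [0,1]^X of binary-label experts and every horizon T ≥ 1, the minimax regret satisfies R_T(F) ≤ inf_{α > 0} { T·log(1 + 2α) + H∞(F, α, T) }. -/

import Mathlib

open scoped BigOperators

/-- The probability simplex on a finite label set `Y`. -/
abbrev Simplex (Y : Type*) [Fintype Y] :=
  {p : Y → ℝ // (∀ y, 0 ≤ p y) ∧ ∑ y, p y = 1}

/-- A sequential expert: given contexts `x₁,…,x_t` (a list of length `t`) and past labels
`y₁,…,y_{t-1}` (a list of length `t-1`), it predicts a distribution over labels. -/
abbrev Expert (X Y : Type*) [Fintype Y] := List X → List Y → Simplex Y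

/-- `-log x` as an extended real, with `-log 0 = ⊤` (and junk value `⊤` for `x < 0`). -/
noncomputable def negLog (x : ℝ) : EReal :=
  if x ≤ 0 then ⊤ else ((-Real.log x : ℝ) : EReal)

/-- `log x` as an extended real, with `log 0 = ⊥` (and junk value `⊥` for `x < 0`). -/
noncomputable def elog (x : ℝ) : EReal :=
  if x ≤ 0 then ⊥ else ((Real.log x : ℝ) : EReal)

/-- The logarithmic loss `ℓ(p, y) = -log p(y) ∈ [0, ∞]`. -/
noncomputable def logloss {Y : Type*} [Fintype Y] (p : Simplex Y) (y : Y) : EReal :=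
  negLog (p.1 y)

/-- Likelihood of expert `f` on a context sequence `xs` and a label sequence `ys`
of the same length: `L(f; y_{1:d} | x_{1:d}) = ∏_{t=1}^d f(x_{1:t}, y_{1:t-1})(y_t)`. -/
noncomputable def likelihood {X Y : Type*} [Fintype Y] [Inhabited Y]
    (f : Expert X Y) (xs : List X) (ys : List Y) : ℝ :=
  ∏ t ∈ Finset.range ys.length, (f (xs.take (t + 1)) (ys.take t)).1 (ys.getD t default)

/-- Cumulative log loss of expert `f` on `xs`, `ys`:
`Σ_{t=1}^d ℓ(f(x_{1:t}, y_{1:t-1}), y_t)`. -/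
noncomputable def cumLoss {X Y : Type*} [Fintype Y] [Inhabited Y]
    (f : Expert X Y) (xs : List X) (ys : List Y) : EReal :=
  ∑ t ∈ Finset.range ys.length, logloss (f (xs.take (t + 1)) (ys.take t)) (ys.getD t default)

/-- A context tree of depth `T` is modelled as a map `χ : List Y → X` (only its values on
lists of length `< T` matter): `x_t(y) = χ (y_{1:t-1})`.  `treePath χ ys` is the context
sequence `x(y) = (x_1, x_2(y_1), …)` obtained by tracing the tree along the path `ys`. -/
def treePath {X Y : Type*} (χ : List Y → X) (ys : List Y) : List X :=
  (List.range ys.length).map fun t => χ (ys.take t)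

/-- The contextual Shtarkov sum of `F` on a context tree `χ` of depth `r`, with prefix
`xs ∈ X^t`, `ys ∈ Y^t`:
`S_T(F, χ | x_{1:t}, y_{1:t}) = Σ_{y ∈ Y^r} sup_{f ∈ F} L(f; (y_{1:t}, y) | (x_{1:t}, χ(y)))`. -/
noncomputable def shtarkovPrefix {X Y : Type*} [Fintype Y] [Inhabited Y]
    (F : Set (Expert X Y)) (r : ℕ) (χ : List Y → X) (xs : List X) (ys : List Y) : ℝ :=
  ∑ y : Fin r → Y, ⨆ f : F,
    likelihood (f : Expert X Y) (xs ++ treePath χ (List.ofFn y)) (ys ++ List.ofFn y)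

/-- The contextual Shtarkov sum `S_T(F | χ) = Σ_{y ∈ Y^T} sup_{f ∈ F} L(f; y | χ(y))`. -/
noncomputable def shtarkov {X Y : Type*} [Fintype Y] [Inhabited Y]
    (F : Set (Expert X Y)) (T : ℕ) (χ : List Y → X) : ℝ :=
  shtarkovPrefix F T χ [] []

/-- The extensive-form game value with `r` rounds to go, given past contexts `xs`, past
labels `ys`, and accumulated learner loss `acc`:
`sup_{x} inf_{p̂} sup_{y} ⋯ [ acc + Σ ℓ(p̂_s, y_s) − inf_{f ∈ F} Σ_{s=1}^T ℓ(f, y_s) ]`. -/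
noncomputable def valToGo {X Y : Type*} [Fintype Y] [Inhabited Y]
    (F : Set (Expert X Y)) : ℕ → List X → List Y → EReal → EReal
  | 0, xs, ys, acc => acc - ⨅ f : F, cumLoss (f : Expert X Y) xs ys
  | r + 1, xs, ys, acc =>
      ⨆ x : X, ⨅ p : Simplex Y, ⨆ y : Y,
        valToGo F r (xs ++ [x]) (ys ++ [y]) (acc + logloss p y)

/-- The minimax regret
`R_T(F) = sup_{x_1} inf_{p̂_1} sup_{y_1} ⋯ sup_{x_T} inf_{p̂_T} sup_{y_T} R_T(F; p̂, x, y)`. -/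
noncomputable def minimaxRegret {X Y : Type*} [Fintype Y] [Inhabited Y]
    (F : Set (Expert X Y)) (T : ℕ) : EReal :=
  valToGo F T [] [] 0

/-- Nested conditional expectation over a probabilistic tree `π`, for `r` remaining rounds:
`E_{y_1 ∼ π([])} E_{y_2 ∼ π(y_{1:1})} ⋯ [g(y_{1:r})]`. -/
noncomputable def expTree {Y : Type*} [Fintype Y] (π : List Y → Simplex Y)
    (g : List Y → EReal) : ℕ → List Y → EReal
  | 0, pre => g pre
  | r + 1, pre => ∑ y : Y, ((π pre).1 y : EReal) * expTree π g r (pre ++ [y])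

/-- The dual (max-min) value-to-go `W(F, x_{1:t}, y_{1:t})`: the supremum over context trees
`χ` and probabilistic trees `π` of depth `r = T - t` of
`E_{y∼π}[ Σ_{s=t+1}^T ℓ(π_s(y), y_s) − inf_{f ∈ F} Σ_{s=1}^T ℓ(f, y_s) ]`. -/
noncomputable def dualValToGo {X Y : Type*} [Fintype Y] [Inhabited Y]
    (F : Set (Expert X Y)) (r : ℕ) (xs : List X) (ys : List Y) : EReal :=
  ⨆ χ : List Y → X, ⨆ π : List Y → Simplex Y,
    expTree π (fun suf =>
      (∑ s ∈ Finset.range r, logloss (π (suf.take s)) (suf.getD s default)) -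
        ⨅ f : F, cumLoss (f : Expert X Y) (xs ++ treePath χ suf) (ys ++ suf)) r []

/-- The dual (max-min) value `V_T(F)`. -/
noncomputable def dualValue {X Y : Type*} [Fintype Y] [Inhabited Y]
    (F : Set (Expert X Y)) (T : ℕ) : EReal :=
  dualValToGo F T [] []
/-- A binary-label expert class member: a function `X → [0,1]`. -/
abbrev UnitFn (X : Type*) := X → Set.Icc (0 : ℝ) 1

/-- The Bernoulli distribution on `Bool` with mean `r ∈ [0,1]` (label `true` ↔ `1`). -/
noncomputable def bernoulliOn (r : Set.Icc (0 : ℝ) 1) : Simplex Bool :=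
  ⟨fun b => if b then (r : ℝ) else 1 - (r : ℝ), by
    constructor
    · intro b
      cases b with
      | false => simpa using r.2.2
      | true => simpa using r.2.1
    · rw [Fintype.sum_bool]
      simp⟩

/-- The sequential expert induced by `f : X → [0,1]`: it predicts the Bernoulli
distribution with mean `f(x_t)`, where `x_t` is the most recent context. -/
noncomputable def bexpert {X : Type*} [Inhabited X] (f : UnitFn X) : Expert X Bool :=
  fun xs _ => bernoulliOn (f (xs.getLast?.getD default))

/-- `V` is a sequential `ℓ∞` cover of `F ∘ χ` at scale `α` and depth `T`: for every `f ∈ F`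
and every path `y ∈ {0,1}^T` there is a tree `v ∈ V` with
`|f(x_t(y)) − v_t(y)| ≤ α` for all `t ∈ [T]`. -/
def IsSeqCover {X : Type*} (F : Set (UnitFn X)) (χ : List Bool → X) (α : ℝ) (T : ℕ)
    (V : Finset (List Bool → ℝ)) : Prop :=
  ∀ f ∈ F, ∀ y : Fin T → Bool, ∃ v ∈ V, ∀ t : Fin T,
    |(f (χ ((List.ofFn y).take t)) : ℝ) - v ((List.ofFn y).take t)| ≤ α

/-- The sequential `ℓ∞` covering number `N∞(F∘χ, α, T)`: size of the smallest cover
(`⊤` if no finite cover exists). -/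
noncomputable def coveringNumber {X : Type*} (F : Set (UnitFn X)) (χ : List Bool → X)
    (α : ℝ) (T : ℕ) : ℕ∞ :=
  ⨅ (V : Finset (List Bool → ℝ)) (_ : IsSeqCover F χ α T V), (V.card : ℕ∞)

/-- `log` of an extended natural number, valued in the extended reals. -/
noncomputable def elogENat (n : ℕ∞) : EReal :=
  WithTop.recTopCoe ⊤ (fun k => elog (k : ℝ)) n

/-- An extended natural number as an extended real. -/
noncomputable def enatToEReal (n : ℕ∞) : EReal :=
  WithTop.recTopCoe ⊤ (fun k => ((k : ℝ) : EReal)) n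

/-- The sequential `ℓ∞` entropy `H∞(F, α, T) = sup_χ log N∞(F∘χ, α, T)`. -/
noncomputable def seqEntropy {X : Type*} (F : Set (UnitFn X)) (α : ℝ) (T : ℕ) : EReal :=
  ⨆ χ : List Bool → X, elogENat (coveringNumber F χ α T)

/-!
The learner that predicts with the normalised contextual Shtarkov sums (a sequential
normalised maximum likelihood) shows, by backward induction over the game, that the regret is
at most `log sup_χ S_T(F | χ)`.  On a fixed context tree `χ` with a sequential cover `V` at
scale `α`, the likelihood of each `f ∈ F` along a path is at most `(1 + 2α)^T` times the
likelihood of the expert predicting the smoothed mean `(clamp v + α) / (1 + 2α)` of a covering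
tree `v`; the likelihoods of such an expert sum to `1` over all paths, so
`S_T(F | χ) ≤ (1 + 2α)^T |V|`.
-/

section ExtendedLog

lemma negLog_zero : negLog 0 = ⊤ := if_pos le_rfl

lemma elog_zero : elog 0 = ⊥ := if_pos le_rfl

lemma negLog_ne_bot (x : ℝ) : negLog x ≠ ⊥ := by
  unfold negLog; split <;> simp

lemma neg_negLog (x : ℝ) : -negLog x = elog x := by
  unfold negLog elog; split <;> simp

lemma negLog_antitone : Antitone negLog := by
  intro x y h
  by_cases hx : x ≤ 0
  · simp [negLog, hx]
  · have hx : 0 < x := not_le.mp hx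
    rw [negLog, negLog, if_neg hx.not_ge, if_neg (hx.trans_le h).not_ge, EReal.coe_le_coe_iff]
    exact neg_le_neg (Real.log_le_log hx h)

lemma elog_monotone : Monotone elog := by
  intro x y h
  rw [← neg_negLog, ← neg_negLog, EReal.neg_le_neg_iff]
  exact negLog_antitone h

lemma negLog_mul {a b : ℝ} (ha : 0 ≤ a) (hb : 0 ≤ b) :
    negLog (a * b) = negLog a + negLog b := by
  rcases ha.eq_or_lt with rfl | ha
  · rw [zero_mul, negLog_zero, EReal.top_add_of_ne_bot (negLog_ne_bot b)]
  rcases hb.eq_or_lt with rfl | hb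
  · rw [mul_zero, negLog_zero, EReal.add_top_of_ne_bot (negLog_ne_bot a)]
  rw [negLog, negLog, negLog, if_neg ha.not_ge, if_neg hb.not_ge, if_neg (mul_pos ha hb).not_ge,
    Real.log_mul ha.ne' hb.ne', neg_add, EReal.coe_add]

lemma negLog_prod {ι : Type*} (s : Finset ι) {g : ι → ℝ} (hg : ∀ i ∈ s, 0 ≤ g i) :
    negLog (∏ i ∈ s, g i) = ∑ i ∈ s, negLog (g i) := by
  induction s using Finset.cons_induction with
  | empty => simp [negLog]
  | cons a s ha ih =>
    rw [Finset.forall_mem_cons] at hg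
    rw [Finset.prod_cons, Finset.sum_cons, negLog_mul hg.1 (Finset.prod_nonneg hg.2), ih hg.2]

lemma elog_le_coe_iff {x c : ℝ} : elog x ≤ (c : EReal) ↔ x ≤ Real.exp c := by
  by_cases hx : x ≤ 0
  · simp only [elog, hx, if_true, bot_le, true_iff]
    exact hx.trans (Real.exp_pos c).le
  · rw [elog, if_neg hx, EReal.coe_le_coe_iff, Real.log_le_iff_le_exp (not_le.mp hx)]

lemma elog_iSup_le {ι : Sort*} {g : ι → ℝ} {b : EReal} (h : ∀ i, elog (g i) ≤ b) :
    elog (⨆ i, g i) ≤ b := by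
  induction b using EReal.rec with
  | bot =>
    have hg : ∀ i, g i ≤ 0 := fun i => by
      by_contra hi
      simpa [elog, hi] using h i
    rw [elog, if_pos (Real.iSup_le hg le_rfl)]
  | coe c =>
    rw [elog_le_coe_iff]
    exact Real.iSup_le (fun i => elog_le_coe_iff.mp (h i)) (Real.exp_pos c).le
  | top => exact le_top

lemma elog_mul_of_pos {a : ℝ} (ha : 0 < a) (b : ℝ) : elog (a * b) = Real.log a + elog b := by
  by_cases hb : b ≤ 0
  · rw [elog, if_pos (mul_nonpos_of_nonneg_of_nonpos ha.le hb), elog, if_pos hb, EReal.add_bot]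
  · have hb : 0 < b := not_le.mp hb
    rw [elog, elog, if_neg (mul_pos ha hb).not_ge, if_neg hb.not_ge, Real.log_mul ha.ne' hb.ne',
      EReal.coe_add]

lemma negLog_div_add_elog_le {a b : ℝ} (ha : 0 ≤ a) (hb : 0 < b) :
    negLog (a / b) + elog a ≤ elog b := by
  rcases ha.eq_or_lt with rfl | ha
  · rw [elog_zero, EReal.add_bot]
    exact bot_le
  rw [negLog, elog, elog, if_neg (div_pos ha hb).not_ge, if_neg ha.not_ge, if_neg hb.not_ge,
    ← EReal.coe_add, EReal.coe_le_coe_iff, Real.log_div ha.ne' hb.ne']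
  linarith

end ExtendedLog

lemma sum_ciSup_le {ι κ : Type*} [Nonempty κ] (s : Finset ι) {g : ι → κ → ℝ} {B : ℝ}
    (h : ∀ k : ι → κ, ∑ i ∈ s, g i (k i) ≤ B) :
    ∑ i ∈ s, ⨆ k, g i k ≤ B := by
  classical
  induction s using Finset.cons_induction generalizing B with
  | empty => simpa using h fun _ => Classical.arbitrary κ
  | cons a s ha ih =>
    have hrest (k₀ : κ) : ∑ i ∈ s, ⨆ k, g i k ≤ B - g a k₀ := ih fun k => by
      have hk := h (Function.update k a k₀)
      have hs : ∑ i ∈ s, g i (Function.update k a k₀ i) = ∑ i ∈ s, g i (k i) :=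
        Finset.sum_congr rfl fun i hi => by rw [Function.update_of_ne (ne_of_mem_of_not_mem hi ha)]
      rw [Finset.sum_cons, Function.update_self, hs] at hk
      linarith
    have hhead : ⨆ k, g a k ≤ B - ∑ i ∈ s, ⨆ k, g i k :=
      ciSup_le fun k₀ => by linarith [hrest k₀]
    rw [Finset.sum_cons]
    linarith

lemma treePath_cons {X Y : Type*} (χ : List Y → X) (a : Y) (l : List Y) :
    treePath χ (a :: l) = χ [] :: treePath (fun s => χ (a :: s)) l := by
  simp [treePath, List.range_succ_eq_map, List.map_map, Function.comp_def]

section Simplex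

variable {Y : Type*} [Fintype Y]

lemma simplex_le_one (p : Simplex Y) (y : Y) : p.1 y ≤ 1 :=
  (Finset.single_le_sum (fun z _ => p.2.1 z) (Finset.mem_univ y)).trans_eq p.2.2

lemma exists_simplex_logloss_add_elog_le [Nonempty Y] {s : Y → ℝ} (hs : ∀ y, 0 ≤ s y) :
    ∃ p : Simplex Y, ∀ y, logloss p y + elog (s y) ≤ elog (∑ y, s y) := by
  rcases (Finset.sum_nonneg fun y _ => hs y).eq_or_lt with hS | hS
  · have hs0 : ∀ y, s y = 0 := fun y =>
      (Finset.sum_eq_zero_iff_of_nonneg fun y _ => hs y).mp hS.symm y (Finset.mem_univ y)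
    refine ⟨⟨fun _ => (Fintype.card Y : ℝ)⁻¹, fun _ => by positivity, ?_⟩, fun y => ?_⟩
    · simp [Finset.card_univ, Fintype.card_ne_zero]
    · rw [hs0, elog_zero, EReal.add_bot]
      exact bot_le
  · exact ⟨⟨fun y => s y / ∑ z, s z, fun y => div_nonneg (hs y) hS.le,
      by rw [← Finset.sum_div, div_self hS.ne']⟩, fun y => negLog_div_add_elog_le (hs y) hS⟩

end Simplex

section Shtarkov

variable {X Y : Type*} [Fintype Y] [Inhabited Y]

lemma likelihood_nonneg (f : Expert X Y) (xs : List X) (ys : List Y) :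
    0 ≤ likelihood f xs ys :=
  Finset.prod_nonneg fun _ _ => (f _ _).2.1 _

lemma likelihood_le_one (f : Expert X Y) (xs : List X) (ys : List Y) :
    likelihood f xs ys ≤ 1 :=
  Finset.prod_le_one (fun _ _ => (f _ _).2.1 _) fun _ _ => simplex_le_one _ _

lemma cumLoss_eq_negLog_likelihood (f : Expert X Y) (xs : List X) (ys : List Y) :
    cumLoss f xs ys = negLog (likelihood f xs ys) :=
  (negLog_prod _ fun _ _ => (f _ _).2.1 _).symm

lemma likelihood_append_singleton (f : Expert X Y) (xs : List X) (ys : List Y) (y : Y) :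
    likelihood f xs (ys ++ [y]) = likelihood f xs ys * (f (xs.take (ys.length + 1)) ys).1 y := by
  unfold likelihood
  rw [List.length_append, List.length_singleton, Finset.prod_range_succ]
  congr 1
  · refine Finset.prod_congr rfl fun t ht => ?_
    have ht : t < ys.length := Finset.mem_range.mp ht
    rw [List.take_append_of_le_length ht.le, List.getD_append _ _ _ _ ht]
  · simp

lemma likelihood_le_pow_mul {f g : Expert X Y} {xs xs' : List X} {ys : List Y} {c : ℝ}
    (h : ∀ t < ys.length, (f (xs.take (t + 1)) (ys.take t)).1 (ys.getD t default) ≤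
      c * (g (xs'.take (t + 1)) (ys.take t)).1 (ys.getD t default)) :
    likelihood f xs ys ≤ c ^ ys.length * likelihood g xs' ys := by
  calc likelihood f xs ys
      ≤ ∏ t ∈ Finset.range ys.length,
          c * (g (xs'.take (t + 1)) (ys.take t)).1 (ys.getD t default) :=
        Finset.prod_le_prod (fun _ _ => (f _ _).2.1 _) fun t ht => h t (Finset.mem_range.mp ht)
    _ = c ^ ys.length * likelihood g xs' ys := by
        rw [Finset.prod_mul_distrib, Finset.prod_const, Finset.card_range, likelihood]

lemma sum_likelihood_ofFn (f : Expert X Y) (xs : List X) (n : ℕ) :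
    ∑ y : Fin n → Y, likelihood f xs (List.ofFn y) = 1 := by
  induction n with
  | zero => simp [likelihood]
  | succ n ih =>
    rw [← (Fin.snocEquiv fun _ => Y).sum_comp, Fintype.sum_prod_type_right, ← ih]
    refine Finset.sum_congr rfl fun y _ => ?_
    simp only [Fin.snocEquiv, Equiv.coe_fn_mk, List.ofFn_succ', Fin.snoc_castSucc, Fin.snoc_last,
      List.concat_eq_append, likelihood_append_singleton, ← Finset.mul_sum]
    rw [(f _ _).2.2, mul_one]

variable (F : Set (Expert X Y))

lemma shtarkovPrefix_nonneg (r : ℕ) (χ : List Y → X) (xs : List X) (ys : List Y) :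
    0 ≤ shtarkovPrefix F r χ xs ys :=
  Finset.sum_nonneg fun _ _ => Real.iSup_nonneg fun _ => likelihood_nonneg _ _ _

lemma shtarkovPrefix_le_card (r : ℕ) (χ : List Y → X) (xs : List X) (ys : List Y) :
    shtarkovPrefix F r χ xs ys ≤ Fintype.card (Fin r → Y) := by
  calc shtarkovPrefix F r χ xs ys ≤ ∑ _y : Fin r → Y, (1 : ℝ) :=
        Finset.sum_le_sum fun _ _ => Real.iSup_le (fun _ => likelihood_le_one _ _ _) zero_le_one
    _ = Fintype.card (Fin r → Y) := by simp

lemma bddAbove_range_shtarkovPrefix (r : ℕ) (xs : List X) (ys : List Y) :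
    BddAbove (Set.range fun χ : List Y → X => shtarkovPrefix F r χ xs ys) :=
  ⟨_, Set.forall_mem_range.2 fun χ => shtarkovPrefix_le_card F r χ xs ys⟩

lemma shtarkovPrefix_zero (χ : List Y → X) (xs : List X) (ys : List Y) :
    shtarkovPrefix F 0 χ xs ys = ⨆ f : F, likelihood (f : Expert X Y) xs ys := by
  simp [shtarkovPrefix, treePath]

lemma shtarkovPrefix_succ (r : ℕ) (χ : List Y → X) (xs : List X) (ys : List Y) :
    shtarkovPrefix F (r + 1) χ xs ys =
      ∑ a : Y, shtarkovPrefix F r (fun s => χ (a :: s)) (xs ++ [χ []]) (ys ++ [a]) := by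
  unfold shtarkovPrefix
  rw [← (Fin.consEquiv fun _ => Y).sum_comp, Fintype.sum_prod_type]
  refine Finset.sum_congr rfl fun a _ => Finset.sum_congr rfl fun y _ => ?_
  simp only [Fin.consEquiv, Equiv.coe_fn_mk, List.ofFn_succ, Fin.cons_zero, Fin.cons_succ,
    treePath_cons, List.append_assoc, List.singleton_append]

lemma sum_iSup_shtarkovPrefix_le (r : ℕ) (x : X) (xs : List X) (ys : List Y) :
    ∑ y, ⨆ χ : List Y → X, shtarkovPrefix F r χ (xs ++ [x]) (ys ++ [y]) ≤
      ⨆ χ : List Y → X, shtarkovPrefix F (r + 1) χ xs ys := by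
  have : Nonempty X := ⟨x⟩
  refine sum_ciSup_le _ fun χs =>
    le_ciSup_of_le (bddAbove_range_shtarkovPrefix F (r + 1) xs ys)
      (fun | [] => x | a :: u => χs a u) ?_
  rw [shtarkovPrefix_succ]

theorem valToGo_le_elog_iSup_shtarkovPrefix [Nonempty X] (r : ℕ) (xs : List X) (ys : List Y)
    (acc : EReal) :
    valToGo F r xs ys acc ≤ acc + elog (⨆ χ : List Y → X, shtarkovPrefix F r χ xs ys) := by
  induction r generalizing xs ys acc with
  | zero =>
    simp only [shtarkovPrefix_zero, ciSup_const, valToGo, sub_eq_add_neg, ← neg_negLog]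
    refine add_le_add le_rfl (EReal.neg_le_neg_iff.mpr (le_iInf fun f => ?_))
    rw [cumLoss_eq_negLog_likelihood]
    exact negLog_antitone (le_ciSup ⟨1, Set.forall_mem_range.2 fun _ => likelihood_le_one _ _ _⟩ f)
  | succ r ih =>
    refine iSup_le fun x => ?_
    obtain ⟨p, hp⟩ := exists_simplex_logloss_add_elog_le
      (s := fun y => ⨆ χ : List Y → X, shtarkovPrefix F r χ (xs ++ [x]) (ys ++ [y]))
      fun y => Real.iSup_nonneg fun χ => shtarkovPrefix_nonneg F r χ _ _
    refine iInf_le_of_le p (iSup_le fun y => (ih _ _ _).trans ?_)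
    rw [add_assoc]
    exact add_le_add le_rfl ((hp y).trans (elog_monotone (sum_iSup_shtarkovPrefix_le F r x xs ys)))

theorem minimaxRegret_le_elog_iSup_shtarkov [Nonempty X] (T : ℕ) :
    minimaxRegret F T ≤ elog (⨆ χ : List Y → X, shtarkov F T χ) := by
  simpa [minimaxRegret, shtarkov] using valToGo_le_elog_iSup_shtarkovPrefix F T [] [] 0

end Shtarkov

section Cover

noncomputable def smoothedMean {α : ℝ} (hα : 0 ≤ α) (w : ℝ) : Set.Icc (0 : ℝ) 1 :=
  ⟨(Set.projIcc 0 1 zero_le_one w + α) / (1 + 2 * α), by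
    have hw := (Set.projIcc 0 1 zero_le_one w).2
    constructor
    · exact div_nonneg (by linarith [hw.1]) (by linarith)
    · exact (div_le_one (by linarith)).mpr (by linarith [hw.2])⟩

lemma bernoulliOn_le_mul_smoothedMean {α : ℝ} (hα : 0 ≤ α) {u : Set.Icc (0 : ℝ) 1} {w : ℝ}
    (huw : |(u : ℝ) - w| ≤ α) (b : Bool) :
    (bernoulliOn u).1 b ≤ (1 + 2 * α) * (bernoulliOn (smoothedMean hα w)).1 b := by
  have hclamp := Set.abs_projIcc_sub_projIcc (h := zero_le_one) (c := (u : ℝ)) (d := w)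
  rw [Set.projIcc_val] at hclamp
  have hu := abs_le.mp (hclamp.trans huw)
  have hα' : (1 + 2 * α) ≠ 0 := by linarith
  cases b <;> simp only [bernoulliOn, smoothedMean, Bool.false_eq_true, if_true, if_false,
    mul_sub, mul_div_cancel₀ _ hα'] <;> linarith [hu.1, hu.2]

noncomputable def smoothedExpert {X : Type*} {α : ℝ} (hα : 0 ≤ α) (v : List Bool → ℝ) :
    Expert X Bool :=
  fun _ ys => bernoulliOn (smoothedMean hα (v ys))

variable {X : Type*} [Inhabited X]

lemma bexpert_take_treePath (f : UnitFn X) (χ : List Bool → X) {l : List Bool} {t : ℕ}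
    (ht : t < l.length) (ys : List Bool) :
    bexpert f ((treePath χ l).take (t + 1)) ys = bernoulliOn (f (χ (l.take t))) := by
  have hmin : min (t + 1) l.length = t + 1 := min_eq_left ht
  simp [bexpert, treePath, ← List.map_take, List.take_range, hmin, List.range_succ]

lemma likelihood_bexpert_le_smoothedExpert {α : ℝ} (hα : 0 ≤ α) {f : UnitFn X}
    {χ : List Bool → X} {v : List Bool → ℝ} {l : List Bool}
    (hfv : ∀ t < l.length, |(f (χ (l.take t)) : ℝ) - v (l.take t)| ≤ α) :
    likelihood (bexpert f) (treePath χ l) l ≤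
      (1 + 2 * α) ^ l.length * likelihood (smoothedExpert (X := X) hα v) [] l :=
  likelihood_le_pow_mul fun t ht => by
    rw [bexpert_take_treePath f χ ht]
    exact bernoulliOn_le_mul_smoothedMean hα (hfv t ht) _

lemma shtarkov_le_of_isSeqCover {F : Set (UnitFn X)} {α : ℝ} (hα : 0 ≤ α) {T : ℕ}
    {χ : List Bool → X} {V : Finset (List Bool → ℝ)} (hV : IsSeqCover F χ α T V) :
    shtarkov (bexpert '' F) T χ ≤ (1 + 2 * α) ^ T * V.card := by
  have hpow : 0 ≤ (1 + 2 * α) ^ T := pow_nonneg (by linarith) T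
  have hpath : ∀ y : Fin T → Bool,
      ⨆ g : bexpert '' F, likelihood (g : Expert X Bool)
        ([] ++ treePath χ (List.ofFn y)) ([] ++ List.ofFn y) ≤
      (1 + 2 * α) ^ T * ∑ v ∈ V, likelihood (smoothedExpert (X := X) hα v) [] (List.ofFn y) := by
    intro y
    refine Real.iSup_le (fun ⟨_, f, hf, hfg⟩ => ?_)
      (mul_nonneg hpow (Finset.sum_nonneg fun _ _ => likelihood_nonneg _ _ _))
    obtain ⟨v, hv, hfv⟩ := hV f hf y
    subst hfg
    calc _ ≤ (1 + 2 * α) ^ T * likelihood (smoothedExpert (X := X) hα v) [] (List.ofFn y) := by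
          simpa using likelihood_bexpert_le_smoothedExpert hα (l := List.ofFn y)
            fun t ht => hfv ⟨t, by simpa using ht⟩
      _ ≤ _ := mul_le_mul_of_nonneg_left
          (Finset.single_le_sum (fun _ _ => likelihood_nonneg _ _ _) hv) hpow
  calc shtarkov (bexpert '' F) T χ
      ≤ ∑ y : Fin T → Bool,
          (1 + 2 * α) ^ T * ∑ v ∈ V, likelihood (smoothedExpert (X := X) hα v) [] (List.ofFn y) :=
        Finset.sum_le_sum fun y _ => hpath y
    _ = (1 + 2 * α) ^ T * V.card := by
        rw [← Finset.mul_sum, Finset.sum_comm]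
        simp [sum_likelihood_ofFn]

lemma elog_shtarkov_le_coveringNumber (F : Set (UnitFn X)) {α : ℝ} (hα : 0 < α) (T : ℕ)
    (χ : List Bool → X) :
    elog (shtarkov (bexpert '' F) T χ) ≤
      ((T * Real.log (1 + 2 * α) : ℝ) : EReal) + elogENat (coveringNumber F χ α T) := by
  rcases isEmpty_or_nonempty {V // IsSeqCover F χ α T V} with hV | hV
  · have hN : coveringNumber F χ α T = ⊤ := by
      simp [coveringNumber, iInf_subtype']
    rw [hN]
    exact le_top.trans_eq (EReal.add_top_of_ne_bot (EReal.coe_ne_bot _)).symm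
  · obtain ⟨⟨V, hV⟩, hmin⟩ := ciInf_mem fun V : {V // IsSeqCover F χ α T V} => (V.1.card : ℕ∞)
    have hN : coveringNumber F χ α T = V.card := by rw [coveringNumber, iInf_subtype', ← hmin]
    calc elog (shtarkov (bexpert '' F) T χ) ≤ elog ((1 + 2 * α) ^ T * V.card) :=
          elog_monotone (shtarkov_le_of_isSeqCover hα.le hV)
      _ = _ := by rw [elog_mul_of_pos (by positivity), Real.log_pow, hN]; rfl

end Cover

theorem minimaxRegret_le_seqEntropy_bound_general
    {X : Type*} [Inhabited X] (F : Set (UnitFn X))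
    (T : ℕ) :
    minimaxRegret (bexpert '' F) T ≤
      ⨅ (α : ℝ) (_ : 0 < α),
        ((((T : ℝ) * Real.log (1 + 2 * α)) : ℝ) : EReal) + seqEntropy F α T := by
  refine le_iInf₂ fun α hα => (minimaxRegret_le_elog_iSup_shtarkov _ T).trans ?_
  refine elog_iSup_le fun χ => (elog_shtarkov_le_coveringNumber F hα T χ).trans ?_
  exact add_le_add le_rfl (le_iSup (fun χ => elogENat (coveringNumber F χ α T)) χ)

/-- For every nonempty class `F ⊆ [0,1]^X` of binary-label experts and
every horizon `T ≥ 1`, the minimax regret satisfies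
`R_T(F) ≤ inf_{α > 0} { T·log(1 + 2α) + H∞(F, α, T) }`. -/
theorem minimaxRegret_le_seqEntropy_bound
    {X : Type*} [Inhabited X] (F : Set (UnitFn X)) (hF : F.Nonempty)
    (T : ℕ) (hT : 1 ≤ T) :
    minimaxRegret (bexpert '' F) T ≤
      ⨅ (α : ℝ) (_ : 0 < α),
        ((((T : ℝ) * Real.log (1 + 2 * α)) : ℝ) : EReal) + seqEntropy F α T :=
  minimaxRegret_le_seqEntropy_bound_general F T
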